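/- arXiv:2003.03733 — 10 statements merged into one kernel-verified Lean document; each statement's English description precedes it below -/
import Mathlib

section
/- For any positive integer n and prime p, and any integer b ≥ 1 and positive integer ν coprime to p, the sum over k from 1 to p^b·ν of f(gcd(k,ν)) restricted to k coprime to p equals φ(p^b) · Σ_{k=1}^{ν} f(gcd(k,ν)), for any arithmetic function f. -/
open Finset

/-
The summand `k ↦ [k ⊥ p] · f (gcd k ν)` is the product of a `p ^ b`-periodic factor and a
`ν`-periodic factor. Since `p ^ b` and `ν` are coprime, the Chinese remainder theorem identifies
`range (p ^ b * ν)` with `range (p ^ b) × range ν`, so the sum over a full period factors into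
the product of the two sums over their own periods; the first one counts the residues prime to
`p ^ b`.
-/

theorem Finset.sum_Icc_one_eq_sum_range {M : Type*} [AddCommMonoid M] {F : ℕ → M} {N : ℕ}
    (hF : F N = F 0) : ∑ k ∈ Icc 1 N, F k = ∑ k ∈ range N, F k := by
  rcases Nat.eq_zero_or_pos N with rfl | hN
  · simp
  rw [← Ico_add_one_right_eq_Icc, sum_Ico_succ_top hN, range_eq_Ico, sum_eq_sum_Ico_succ_bot hN,
    hF, add_comm]

theorem Nat.Coprime.sum_range_mul_mod_mul_mod {R : Type*} [CommSemiring R] {m n : ℕ}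
    (hmn : m.Coprime n) (g h : ℕ → R) :
    ∑ k ∈ range (m * n), g (k % m) * h (k % n) =
      (∑ i ∈ range m, g i) * ∑ j ∈ range n, h j := by
  rcases Nat.eq_zero_or_pos m with rfl | hm
  · simp
  rcases Nat.eq_zero_or_pos n with rfl | hn
  · simp
  rw [sum_mul_sum, ← sum_product']
  refine sum_nbij' (fun k => (k % m, k % n)) (fun ij => Nat.chineseRemainder hmn ij.1 ij.2)
    ?_ ?_ ?_ ?_ (fun _ _ => rfl)
  · intro k _
    simpa using ⟨Nat.mod_lt k hm, Nat.mod_lt k hn⟩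
  · intro ij _
    simpa using Nat.chineseRemainder_lt_mul hmn ij.1 ij.2 hm.ne' hn.ne'
  · intro k hk
    have hk : k < m * n := by simpa using hk
    have hcr := Nat.chineseRemainder_lt_mul hmn (k % m) (k % n) hm.ne' hn.ne'
    exact Nat.ModEq.eq_of_lt_of_lt
      (Nat.chineseRemainder_modEq_unique hmn (Nat.mod_modEq k m).symm (Nat.mod_modEq k n).symm).symm
      hcr hk
  · rintro ⟨i, j⟩ hij
    simp only [mem_product, mem_range] at hij
    have hcr := (Nat.chineseRemainder hmn i j).2
    exact Prod.ext (Eq.trans hcr.1 (Nat.mod_eq_of_lt hij.1))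
      (Eq.trans hcr.2 (Nat.mod_eq_of_lt hij.2))

theorem Nat.Coprime.sum_range_mul_of_periodic {R : Type*} [CommSemiring R] {m n : ℕ}
    (hmn : m.Coprime n) {g h : ℕ → R} (hg : Function.Periodic g m)
    (hh : Function.Periodic h n) :
    ∑ k ∈ range (m * n), g k * h k = (∑ i ∈ range m, g i) * ∑ j ∈ range n, h j := by
  simp_rw [← hmn.sum_range_mul_mod_mul_mod, hg.map_mod_nat, hh.map_mod_nat]

theorem Nat.sum_range_coprime_pow_indicator {R : Type*} [Semiring R] (p : ℕ) {b : ℕ}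
    (hb : 0 < b) :
    ∑ k ∈ range (p ^ b), (if k.Coprime p then 1 else 0 : R) = (p ^ b).totient := by
  rw [sum_boole, Nat.totient_eq_card_coprime]
  congr 2
  exact filter_congr fun a _ => by rw [Nat.coprime_pow_left_iff hb, Nat.coprime_comm]

theorem coprime_filter_sum_general (f : ℕ → ℂ) (p : ℕ)
    (b : ℕ) (hb : 1 ≤ b) (ν : ℕ) (hcop : Nat.Coprime ν p) :
    (∑ k ∈ (Finset.Icc 1 (p ^ b * ν)).filter (fun k => Nat.Coprime k p),
        f (Nat.gcd k ν)) =
      (Nat.totient (p ^ b) : ℂ) * ∑ k ∈ Finset.Icc 1 ν, f (Nat.gcd k ν) := by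
  set c : ℕ → ℂ := fun k => if k.Coprime p then 1 else 0
  set d : ℕ → ℂ := fun k => f (k.gcd ν)
  have hc : Function.Periodic c (p ^ b) := fun k => by
    obtain ⟨q, hq⟩ : p ∣ p ^ b := dvd_pow_self p (by omega)
    simp only [c, hq, Nat.coprime_add_mul_left_left]
  have hd : Function.Periodic d ν := fun k => by
    simp only [d, Nat.gcd_add_self_left]
  have hcd : Function.Periodic (c * d) (p ^ b * ν) :=
    (mul_comm (p ^ b) ν ▸ hc.nat_mul ν).mul (hd.nat_mul (p ^ b))
  calc (∑ k ∈ (Icc 1 (p ^ b * ν)).filter (fun k => k.Coprime p), f (k.gcd ν))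
      = ∑ k ∈ Icc 1 (p ^ b * ν), c k * d k := by
        simp only [sum_filter, c, d, ite_mul, one_mul, zero_mul]
    _ = ∑ k ∈ range (p ^ b * ν), c k * d k := sum_Icc_one_eq_sum_range hcd.eq
    _ = (∑ i ∈ range (p ^ b), c i) * ∑ j ∈ range ν, d j :=
        (Nat.Coprime.pow_left b hcop.symm).sum_range_mul_of_periodic hc hd
    _ = (p ^ b).totient * ∑ k ∈ Icc 1 ν, f (k.gcd ν) := by
        rw [Nat.sum_range_coprime_pow_indicator p (by omega : 0 < b),
          sum_Icc_one_eq_sum_range (F := d) (by simp [d])]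

theorem coprime_filter_sum (f : ℕ → ℂ) (p : ℕ) (hp : p.Prime)
    (b : ℕ) (hb : 1 ≤ b) (ν : ℕ) (hν : 0 < ν) (hcop : Nat.Coprime ν p) :
    (∑ k ∈ (Finset.Icc 1 (p ^ b * ν)).filter (fun k => Nat.Coprime k p),
        f (Nat.gcd k ν)) =
      (Nat.totient (p ^ b) : ℂ) * ∑ k ∈ Finset.Icc 1 ν, f (Nat.gcd k ν) :=
  coprime_filter_sum_general f p b hb ν hcop
end

section
/- For a multiplicative function f, prime p, α ≥ 1, 0 ≤ a ≤ α, and positive integer ν coprime to p: Σ_{1≤k≤p^α ν, v_p(k) ≥ α−a} f(gcd(k, p^α ν)) = (Σ_{b=0}^{a} f(p^{α−b}) φ(p^b)) · Σ_{k=1}^{ν} f(gcd(k,ν)). -/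
/-!
Writing `n = p ^ α * ν`, the sum is `∑ k ≤ n, G (gcd k n)` with `G d = f d` if `p ^ (α - a) ∣ d`
and `0` otherwise, since that divisibility condition on `k` is the same as on `gcd k n`. Grouping
by the value of the gcd turns it into `∑ d ∣ n, φ (n / d) G d`. As `p ^ α` and `ν` are coprime,
the divisors of `n` are the products `p ^ c * e` with `c ≤ α`, `e ∣ ν`, and both `G` and `φ`
split over such products, so the sum factors into a `p`-part and a `ν`-part; the `ν`-part is
again a gcd sum, and the `p`-part becomes the sum over `b` after substituting `c = α - b`.
-/

open Finset

theorem Nat.sum_Icc_gcd_eq_sum_divisors {M : Type*} [AddCommMonoid M] (g : ℕ → M) (n : ℕ) :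
    ∑ k ∈ Icc 1 n, g (k.gcd n) = ∑ d ∈ n.divisors, Nat.totient (n / d) • g d := by
  have shift : ∑ k ∈ Icc 1 n, g (k.gcd n) = ∑ k ∈ range n, g (n.gcd k) := by
    rcases n.eq_zero_or_pos with rfl | hn
    · simp
    rw [← Ico_add_one_right_eq_Icc, sum_Ico_succ_top hn, range_eq_Ico,
      sum_eq_sum_Ico_succ_bot hn, add_comm]
    simp only [Nat.gcd_self, Nat.gcd_zero_right, Nat.gcd_comm]
  rw [shift, ← sum_fiberwise_of_maps_to (t := n.divisors) (g := n.gcd) ?_]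
  · refine sum_congr rfl fun d hd => ?_
    rw [sum_congr rfl fun k hk => congrArg g (mem_filter.1 hk).2, sum_const,
      ← Nat.totient_div_of_dvd (Nat.dvd_of_mem_divisors hd)]
  · intro k hk
    exact Nat.mem_divisors.2 ⟨Nat.gcd_dvd_left n k, by rintro rfl; simp at hk⟩

theorem Nat.Coprime.sum_divisors_mul_eq_sum_sum {M : Type*} [AddCommMonoid M] {m n : ℕ}
    (hmn : m.Coprime n) (g : ℕ → M) :
    ∑ d ∈ (m * n).divisors, g d = ∑ i ∈ m.divisors, ∑ j ∈ n.divisors, g (i * j) := by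
  rw [hmn.divisors_mul, sum_map, ← sum_product']
  exact sum_attach _ fun ij : ℕ × ℕ => g (ij.1 * ij.2)

theorem Nat.Coprime.totient_mul_div_mul {m n i j : ℕ} (hmn : m.Coprime n) (hi : i ∣ m)
    (hj : j ∣ n) : Nat.totient (m * n / (i * j)) = Nat.totient (m / i) * Nat.totient (n / j) := by
  rw [← Nat.div_mul_div_comm hi hj,
    Nat.totient_mul ((hmn.coprime_div_left hi).coprime_div_right hj)]

theorem Nat.Coprime.sum_divisors_totient_nsmul_mul {R : Type*} [CommSemiring R] {m n : ℕ}
    (hmn : m.Coprime n) {g h k : ℕ → R}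
    (hk : ∀ i ∈ m.divisors, ∀ j ∈ n.divisors, k (i * j) = g i * h j) :
    ∑ d ∈ (m * n).divisors, Nat.totient (m * n / d) • k d =
      (∑ i ∈ m.divisors, Nat.totient (m / i) • g i) *
        ∑ j ∈ n.divisors, Nat.totient (n / j) • h j := by
  rw [hmn.sum_divisors_mul_eq_sum_sum, sum_mul_sum]
  refine sum_congr rfl fun i hi => sum_congr rfl fun j hj => ?_
  rw [hmn.totient_mul_div_mul (Nat.dvd_of_mem_divisors hi) (Nat.dvd_of_mem_divisors hj),
    hk i hi j hj, nsmul_eq_mul, nsmul_eq_mul, nsmul_eq_mul, Nat.cast_mul]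
  ring

theorem Finset.sum_range_succ_ite_le_eq_sum_range {M : Type*} [AddCommMonoid M]
    (h : ℕ → ℕ → M) {a α : ℕ} (ha : a ≤ α) :
    ∑ c ∈ range (α + 1), (if α - a ≤ c then h c (α - c) else 0) =
      ∑ b ∈ range (a + 1), h (α - b) b := by
  have hfilter : {b ∈ range (α + 1) | α - a ≤ α - b} = range (a + 1) := by
    ext b
    simp only [mem_filter, mem_range]
    omega
  rw [← sum_range_reflect, Nat.add_sub_cancel, ← sum_filter, hfilter]
  exact sum_congr rfl fun b hb => by rw [Nat.sub_sub_self (by grind)]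

theorem le_padicValNat_iff_pow_dvd_gcd {p j k n : ℕ} (hp : p ≠ 1) (hk : k ≠ 0)
    (hn : p ^ j ∣ n) : j ≤ padicValNat p k ↔ p ^ j ∣ k.gcd n := by
  rw [Nat.dvd_gcd_iff, ← padicValNat_dvd_iff_le_of_ne_one hp hk, and_iff_left hn]

theorem sum_valuation_ge_general (f : ℕ → ℂ)
    (hf : ∀ m n : ℕ, Nat.Coprime m n → f (m * n) = f m * f n)
    (p : ℕ) (hp : p.Prime) (α : ℕ) (a : ℕ) (ha : a ≤ α)
    (ν : ℕ) (hcop : Nat.Coprime ν p) :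
    (∑ k ∈ (Finset.Icc 1 (p ^ α * ν)).filter
        (fun k => α - a ≤ padicValNat p k),
      f (Nat.gcd k (p ^ α * ν))) =
      (∑ b ∈ Finset.range (a + 1), f (p ^ (α - b)) * (Nat.totient (p ^ b) : ℂ)) *
        ∑ k ∈ Finset.Icc 1 ν, f (Nat.gcd k ν) := by
  set G : ℕ → ℂ := fun d => if p ^ (α - a) ∣ d then f d else 0 with hG
  have hG_mul : ∀ i ∈ (p ^ α).divisors, ∀ j ∈ ν.divisors, G (i * j) = G i * f j := by
    intro i hi j hj
    have hj : j ∣ ν := Nat.dvd_of_mem_divisors hj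
    have hij : i.Coprime j := ((hcop.symm.pow_left α).coprime_dvd_left
      (Nat.dvd_of_mem_divisors hi)).coprime_dvd_right hj
    simp only [hG, ((hcop.coprime_dvd_left hj).symm.pow_left _).dvd_mul_right, hf _ _ hij]
    split_ifs <;> simp
  calc _ = ∑ k ∈ Icc 1 (p ^ α * ν), G (k.gcd (p ^ α * ν)) := by
        rw [sum_filter]
        refine sum_congr rfl fun k hk => ?_
        simp only [hG, le_padicValNat_iff_pow_dvd_gcd hp.ne_one (by grind : k ≠ 0)
          (dvd_mul_of_dvd_left (Nat.pow_dvd_pow p (Nat.sub_le α a)) ν)]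
    _ = (∑ i ∈ (p ^ α).divisors, Nat.totient (p ^ α / i) • G i) *
          ∑ j ∈ ν.divisors, Nat.totient (ν / j) • f j := by
      rw [Nat.sum_Icc_gcd_eq_sum_divisors,
        (hcop.symm.pow_left α).sum_divisors_totient_nsmul_mul hG_mul]
    _ = _ := by
      rw [Nat.sum_Icc_gcd_eq_sum_divisors f ν, Nat.sum_divisors_prime_pow hp,
        ← sum_range_succ_ite_le_eq_sum_range (fun c b => f (p ^ c) * ((p ^ b).totient : ℂ)) ha]
      refine congrArg (· * _) (sum_congr rfl fun c hc => ?_)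
      simp only [hG, Nat.pow_div (Nat.lt_succ_iff.1 (mem_range.1 hc)) hp.pos,
        Nat.pow_dvd_pow_iff_le_right hp.one_lt, nsmul_eq_mul]
      split_ifs <;> ring

theorem sum_valuation_ge (f : ℕ → ℂ) (hf1 : f 1 = 1)
    (hf : ∀ m n : ℕ, Nat.Coprime m n → f (m * n) = f m * f n)
    (p : ℕ) (hp : p.Prime) (α : ℕ) (hα : 1 ≤ α) (a : ℕ) (ha : a ≤ α)
    (ν : ℕ) (hν : 0 < ν) (hcop : Nat.Coprime ν p) :
    (∑ k ∈ (Finset.Icc 1 (p ^ α * ν)).filter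
        (fun k => α - a ≤ padicValNat p k),
      f (Nat.gcd k (p ^ α * ν))) =
      (∑ b ∈ Finset.range (a + 1), f (p ^ (α - b)) * (Nat.totient (p ^ b) : ℂ)) *
        ∑ k ∈ Finset.Icc 1 ν, f (Nat.gcd k ν) :=
  sum_valuation_ge_general f hf p hp α a ha ν hcop
end

section
/- For integers m, n with 0 < m < n, let S(m,n) = (1/√n) Σ_{l=0}^{n-1} ζ_{2n}^{(n−l)l m} where ζ_{2n} = exp(2πi/(2n)). Then |S(m,n)| = 0 if n is even and both n/gcd(m,n) and m/gcd(m,n) are odd, and |S(m,n)| = √(gcd(m,n)) otherwise. -/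
/-!
Write `φ(t) = ζ_{2n}^{m t (n - t)}`; it is `n`-periodic, so the sum is `S = ∑_{x ∈ ℤ/n} φ(x)`.
Since `φ(x + d) · conj φ(x) = φ(d) · e(-m d x / n)`, expanding `S · conj S` and summing the
additive character over `x` first gives `|S|² = n ∑_{m d ≡ 0} φ(d)`. The solutions of
`m d ≡ 0 (mod n)` are `d = k n/g` with `0 ≤ k < g = gcd(m, n)`, and there
`φ(k n/g) = (-1)^{(m/g)(n/g) k (g - k)}`. This sign is constantly `1`, giving `|S|² = n g`,
unless `m/g` and `n/g` are odd and `g` is even; then it is `(-1)^k` and the sum vanishes.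
-/

open Finset Complex
open scoped Real ComplexConjugate

theorem Nat.dvd_mul_iff_div_gcd_dvd {m n : ℕ} (hn : 0 < n) (a : ℕ) :
    n ∣ m * a ↔ n / Nat.gcd m n ∣ a := by
  constructor
  · intro h
    have h0 : m * a ≡ m * 0 [MOD n] := by rw [mul_zero]; exact Nat.modEq_zero_iff_dvd.mpr h
    simpa [Nat.gcd_comm, Nat.modEq_zero_iff_dvd] using h0.cancel_left_div_gcd hn
  · rintro ⟨c, rfl⟩
    rw [← mul_assoc, ← Nat.mul_div_assoc m (Nat.gcd_dvd_right m n), mul_comm m n,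
      Nat.mul_div_assoc n (Nat.gcd_dvd_left m n), mul_assoc]
    exact dvd_mul_right n _

theorem ZMod.natCast_mul_eq_zero_iff {m n : ℕ} [NeZero n] (d : ZMod n) :
    (m : ZMod n) * d = 0 ↔ n / Nat.gcd m n ∣ d.val := by
  rw [← Nat.dvd_mul_iff_div_gcd_dvd (Nat.pos_of_neZero n), ← ZMod.natCast_eq_zero_iff,
    Nat.cast_mul, ZMod.natCast_zmod_val]

theorem ZMod.sum_val_eq_sum_range {M : Type*} [AddCommMonoid M] (n : ℕ) [NeZero n]
    (F : ℕ → M) :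
    ∑ x : ZMod n, F x.val = ∑ i ∈ range n, F i :=
  sum_nbij' ZMod.val Nat.cast (fun x _ ↦ mem_range.mpr (ZMod.val_lt x)) (fun _ _ ↦ mem_univ _)
    (fun x _ ↦ ZMod.natCast_zmod_val x) (fun _ hi ↦ ZMod.val_cast_of_lt (mem_range.mp hi))
    (fun _ _ ↦ rfl)

theorem Finset.sum_range_mul_filter_dvd {M : Type*} [AddCommMonoid M] (F : ℕ → M) (g : ℕ)
    {q : ℕ} (hq : 0 < q) :
    ∑ i ∈ range (g * q) with q ∣ i, F i = ∑ k ∈ range g, F (k * q) := by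
  symm
  refine sum_nbij (· * q) (fun k hk ↦ ?_) (fun a _ b _ h ↦ Nat.eq_of_mul_eq_mul_right hq h)
    (fun i hi ↦ ?_) (fun _ _ ↦ rfl)
  · simp only [mem_filter, mem_range] at hk ⊢
    exact ⟨Nat.mul_lt_mul_of_pos_right hk hq, dvd_mul_left q k⟩
  · obtain ⟨hi, k, rfl⟩ := by simpa only [coe_filter, mem_range] using hi
    refine ⟨k, mem_range.mpr ?_, mul_comm k q⟩
    exact Nat.lt_of_mul_lt_mul_right (a := q) (by linarith)

theorem ZMod.sum_natCast_mul_eq_zero {M : Type*} [AddCommMonoid M] (m n : ℕ) [NeZero n]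
    (F : ℕ → M) :
    ∑ d : ZMod n with (m : ZMod n) * d = 0, F d.val =
      ∑ k ∈ range (Nat.gcd m n), F (k * (n / Nat.gcd m n)) := by
  have hn : 0 < n := Nat.pos_of_neZero n
  have hn' : 0 < n / Nat.gcd m n :=
    Nat.div_pos (Nat.gcd_le_right (m := m) (n := n) hn) (Nat.gcd_pos_of_pos_right m hn)
  have hrange : range n = range (Nat.gcd m n * (n / Nat.gcd m n)) := by
    rw [Nat.mul_div_cancel' (Nat.gcd_dvd_right m n)]
  simp_rw [sum_filter, ZMod.natCast_mul_eq_zero_iff]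
  rw [ZMod.sum_val_eq_sum_range n (fun i ↦ if n / Nat.gcd m n ∣ i then F i else 0), ← sum_filter,
    hrange, sum_range_mul_filter_dvd F _ hn']

theorem sum_neg_one_pow_mul_mul_sub {R : Type*} [Ring R] (a g : ℕ) :
    ∑ k ∈ range g, (-1 : R) ^ (a * (k * (g - k))) = if Odd a ∧ Even g then 0 else (g : R) := by
  split_ifs with h
  · rw [← neg_one_geom_sum.trans (if_pos h.2)]
    refine sum_congr rfl fun k hk ↦ neg_one_pow_congr ?_
    simp only [Nat.even_mul, Nat.even_sub (mem_range.mp hk).le, h.2, Nat.not_even_iff_odd.mpr h.1]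
    tauto
  · have hterm : ∀ k ∈ range g, (-1 : R) ^ (a * (k * (g - k))) = 1 := fun k hk ↦ by
      refine Even.neg_one_pow ?_
      simp only [Nat.even_mul, Nat.even_sub (mem_range.mp hk).le, ← Nat.not_even_iff_odd] at h ⊢
      tauto
    simp [sum_congr rfl hterm]

theorem sum_mul_conj_sum_eq_card_mul_sum {R : Type*} [CommRing R] [Fintype R] [DecidableEq R]
    {ψ : AddChar R ℂ} (hψ : ψ.IsPrimitive) (φ : R → ℂ) (c : R)
    (hφ : ∀ x d, φ (x + d) * conj (φ x) = φ d * ψ (x * (c * d))) :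
    (∑ x, φ x) * conj (∑ x, φ x) = Fintype.card R * ∑ d with c * d = 0, φ d := by
  calc (∑ y, φ y) * conj (∑ x, φ x) = ∑ x, ∑ d, φ (x + d) * conj (φ x) := by
        rw [map_sum, sum_mul_sum, sum_comm]
        exact sum_congr rfl fun x _ ↦ (Fintype.sum_equiv (Equiv.addLeft x) _ _ fun _ ↦ rfl).symm
    _ = ∑ d, φ d * ∑ x, ψ (x * (c * d)) := by
        rw [sum_comm]; simp_rw [hφ, mul_sum]
    _ = _ := by
        rw [sum_filter, mul_sum]
        refine sum_congr rfl fun d _ ↦ ?_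
        rw [AddChar.sum_mulShift _ hψ]
        split_ifs <;> ring

/-- `quadPhase m n t = ζ_{2n}^{m t (n - t)}`. -/
noncomputable def quadPhase (m n : ℕ) (t : ℤ) : ℂ :=
  exp (π * I * (m * t * (n - t)) / n)

theorem quadPhase_add (m n : ℕ) (a b : ℤ) :
    quadPhase m n (a + b) =
      quadPhase m n a * quadPhase m n b * exp (2 * π * I * (-(m * a * b) : ℤ) / n) := by
  simp only [quadPhase, ← exp_add]
  congr 1
  push_cast
  ring

theorem quadPhase_periodic (m n : ℕ) [NeZero n] : Function.Periodic (quadPhase m n) n := by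
  intro t
  have hn : (n : ℂ) ≠ 0 := NeZero.ne _
  rw [quadPhase_add, show quadPhase m n n = 1 by simp [quadPhase],
    show (2 * π * I * (-(m * t * n) : ℤ) / n : ℂ) = (-(m * t) : ℤ) * (2 * π * I) by
      push_cast; field_simp, exp_int_mul_two_pi_mul_I, mul_one, mul_one]

theorem quadPhase_emod (m n : ℕ) [NeZero n] (t : ℤ) : quadPhase m n (t % n) = quadPhase m n t := by
  simpa [← Int.emod_def, mul_comm] using (quadPhase_periodic m n).sub_int_mul_eq (x := t) (t / n)

theorem norm_quadPhase (m n : ℕ) (t : ℤ) : ‖quadPhase m n t‖ = 1 := by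
  rw [quadPhase, show (π * I * (m * t * (n - t)) / n : ℂ) =
      ((π * m * t * (n - t) / n : ℝ) : ℂ) * I by push_cast; ring]
  exact norm_exp_ofReal_mul_I _

theorem quadPhase_val_add_mul_conj (m n : ℕ) [NeZero n] (x d : ZMod n) :
    quadPhase m n (x + d).val * conj (quadPhase m n x.val) =
      quadPhase m n d.val * ZMod.stdAddChar (x * (-(m : ZMod n) * d)) := by
  have hunit : quadPhase m n x.val * conj (quadPhase m n x.val) = 1 := by
    rw [mul_conj, normSq_eq_norm_sq, norm_quadPhase]; simp
  have hchar : ZMod.stdAddChar (x * (-(m : ZMod n) * d)) =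
      exp (2 * π * I * (-(m * x.val * d.val) : ℤ) / n) := by
    rw [← ZMod.stdAddChar_coe]
    push_cast
    simp only [ZMod.natCast_zmod_val]
    ring_nf
  rw [ZMod.val_add, Int.natCast_mod, Nat.cast_add, quadPhase_emod, quadPhase_add, hchar]
  linear_combination
    (quadPhase m n d.val * exp (2 * π * I * (-(m * x.val * d.val) : ℤ) / n)) * hunit

theorem quadPhase_mul_mul {g p q : ℕ} (hg : g ≠ 0) (hq : q ≠ 0) {k : ℕ} (hk : k ≤ g) :
    quadPhase (g * p) (g * q) (k * q : ℕ) = (-1) ^ (p * q * (k * (g - k))) := by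
  rw [quadPhase, ← exp_pi_mul_I, ← exp_nat_mul]
  congr 1
  push_cast [Nat.cast_sub hk]
  field_simp

theorem normSq_sum_quadPhase (m n : ℕ) [NeZero n] :
    normSq (∑ x : ZMod n, quadPhase m n x.val) =
      (n : ℝ) * if Odd (m / Nat.gcd m n * (n / Nat.gcd m n)) ∧ Even (Nat.gcd m n) then 0
        else (Nat.gcd m n : ℝ) := by
  have hg : Nat.gcd m n ≠ 0 := (Nat.gcd_pos_of_pos_right m (Nat.pos_of_neZero n)).ne'
  have hq : n / Nat.gcd m n ≠ 0 := (Nat.div_pos (Nat.gcd_le_right (m := m) (n := n)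
    (Nat.pos_of_neZero n)) (Nat.pos_of_ne_zero hg)).ne'
  have hgm : Nat.gcd m n * (m / Nat.gcd m n) = m := Nat.mul_div_cancel' (Nat.gcd_dvd_left m n)
  have hgn : Nat.gcd m n * (n / Nat.gcd m n) = n := Nat.mul_div_cancel' (Nat.gcd_dvd_right m n)
  have hphase : ∀ k ∈ range (Nat.gcd m n), quadPhase m n (k * (n / Nat.gcd m n) : ℕ) =
      (-1) ^ (m / Nat.gcd m n * (n / Nat.gcd m n) * (k * (Nat.gcd m n - k))) := fun k hk ↦ by
    simpa only [hgm, hgn] using quadPhase_mul_mul (p := m / Nat.gcd m n) hg hq (mem_range.mp hk).le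
  have := sum_mul_conj_sum_eq_card_mul_sum (ZMod.isPrimitive_stdAddChar n)
    (fun x : ZMod n ↦ quadPhase m n x.val) (-(m : ZMod n)) (quadPhase_val_add_mul_conj m n)
  simp only [mul_conj, ZMod.card, neg_mul, neg_eq_zero] at this
  rw [ZMod.sum_natCast_mul_eq_zero m n (fun i ↦ quadPhase m n i), sum_congr rfl hphase,
    sum_neg_one_pow_mul_mul_sub] at this
  apply ofReal_injective
  rw [this]
  split_ifs <;> push_cast <;> ring

theorem gauss_sum_abs_general (m n : ℕ) (hmn : m < n) :
    (1 / Real.sqrt n) *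
        ‖(∑ l ∈ Finset.range n,
          Complex.exp (2 * Real.pi * Complex.I * (((n - l) * l * m : ℕ) : ℂ) / (2 * n)))‖ =
      if Even n ∧ Odd (n / Nat.gcd m n) ∧ Odd (m / Nat.gcd m n) then 0
      else Real.sqrt (Nat.gcd m n) := by
  have hn : 0 < n := by omega
  have : NeZero n := ⟨hn.ne'⟩
  have hsum : ∑ l ∈ range n, exp (2 * π * I * (((n - l) * l * m : ℕ) : ℂ) / (2 * n)) =
      ∑ x : ZMod n, quadPhase m n x.val := by
    rw [ZMod.sum_val_eq_sum_range n (fun i ↦ quadPhase m n i)]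
    refine sum_congr rfl fun l hl ↦ ?_
    rw [quadPhase]
    congr 1
    push_cast [Nat.cast_sub (mem_range.mp hl).le]
    field_simp
  have hcond : Even n ∧ Odd (n / Nat.gcd m n) ∧ Odd (m / Nat.gcd m n) ↔
      Odd (m / Nat.gcd m n * (n / Nat.gcd m n)) ∧ Even (Nat.gcd m n) := by
    have heven : Even n ↔ Even (Nat.gcd m n) ∨ Even (n / Nat.gcd m n) := by
      rw [← Nat.even_mul, Nat.mul_div_cancel' (Nat.gcd_dvd_right m n)]
    simp only [heven, ← Nat.not_even_iff_odd, Nat.even_mul]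
    tauto
  rw [hsum, norm_def, normSq_sum_quadPhase]
  simp only [hcond]
  split_ifs
  · simp
  · rw [Real.sqrt_mul (Nat.cast_nonneg n)]
    field_simp [Real.sqrt_ne_zero'.mpr (Nat.cast_pos.mpr hn)]

theorem gauss_sum_abs (m n : ℕ) (hm : 0 < m) (hmn : m < n) :
    (1 / Real.sqrt n) *
        ‖(∑ l ∈ Finset.range n,
          Complex.exp (2 * Real.pi * Complex.I * (((n - l) * l * m : ℕ) : ℂ) / (2 * n)))‖ =
      if Even n ∧ Odd (n / Nat.gcd m n) ∧ Odd (m / Nat.gcd m n) then 0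
      else Real.sqrt (Nat.gcd m n) :=
  gauss_sum_abs_general m n hmn
end

section
/- For all integers k, m and positive integer n, |(1/n) Σ_{l=0}^{n−1} ζ_n^{kl} ζ_{2n}^{(n−l)l m}|² = (1/n) Σ_{l=0}^{n−1} ζ_n^{kl} ζ_{2n}^{(n−l)l m} δ^{(n)}_{ml,0}, where δ^{(n)}_{ml,0} = 1 if n divides ml and 0 otherwise. -/
open Finset Complex ComplexConjugate

/-!
The summand `f l = ζ_{2n}^{2kl + (n-l)lm}` is `n`-periodic in `l`, so
`|∑ f|² = ∑_j ∑_l f (j + l) conj (f l)`. Expanding the quadratic exponent gives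
`f (j + l) conj (f l) = f j ζ_n^{-mjl}`, and the inner sum over `l` is `n` when `n ∣ mj`
and `0` otherwise.
-/

theorem Function.Periodic.sum_range_comp_add {M : Type*} [AddCommGroup M] {f : ℤ → M} {n : ℕ}
    (hf : Function.Periodic f n) (c : ℤ) :
    ∑ l ∈ range n, f (l + c) = ∑ l ∈ range n, f l := by
  have step : ∀ c : ℤ, ∑ l ∈ range n, f (l + (c + 1)) = ∑ l ∈ range n, f (l + c) := by
    intro c
    have h := sum_range_succ' (fun l : ℕ => f (l + c)) n
    rw [sum_range_succ, Nat.cast_zero, zero_add, add_comm (n : ℤ), hf c] at h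
    push_cast at h
    simpa only [add_comm, add_left_comm, add_assoc] using (add_right_cancel h).symm
  induction c using Int.induction_on with
  | zero => simp only [add_zero]
  | succ c ih => rw [step, ih]
  | pred c ih => rw [← ih, ← step, sub_add_cancel]

theorem Function.Periodic.sum_range_mul_star_sum {R : Type*} [CommRing R] [StarRing R]
    {f : ℤ → R} {n : ℕ} (hf : Function.Periodic f n) :
    (∑ l ∈ range n, f l) * star (∑ l ∈ range n, f l) =
      ∑ j ∈ range n, ∑ l ∈ range n, f (j + l) * star (f l) := by
  rw [star_sum, sum_mul_sum, sum_comm]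
  refine (sum_congr rfl fun l _ => ?_).trans sum_comm
  rw [← sum_mul, ← sum_mul, hf.sum_range_comp_add]

theorem IsPrimitiveRoot.sum_range_zpow_mul {K : Type*} [Field K] {ω : K} {n : ℕ}
    (hω : IsPrimitiveRoot ω n) (a : ℤ) :
    ∑ l ∈ range n, ω ^ (a * l) = if (n : ℤ) ∣ a then (n : K) else 0 := by
  simp_rw [zpow_mul, zpow_natCast]
  split_ifs with h
  · simp [(hω.zpow_eq_one_iff_dvd a).mpr h]
  · rw [geom_sum_eq ((hω.zpow_eq_one_iff_dvd a).not.mpr h), ← zpow_natCast, ← zpow_mul,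
      mul_comm, zpow_mul, zpow_natCast, hω.pow_eq_one, one_zpow, sub_self, zero_div]

/-- For `ζ = ζ_{2n}` this is the summand `ζ_n^{kl} ζ_{2n}^{(n-l) l m}` of the theorem. -/
noncomputable def chirp (ζ : ℂ) (n : ℕ) (k m l : ℤ) : ℂ := ζ ^ (2 * k * l + (n - l) * l * m)

section chirp

variable {ζ : ℂ} {n : ℕ} (k m : ℤ)

theorem chirp_periodic (hζ : IsPrimitiveRoot ζ (2 * n)) (hn : n ≠ 0) :
    Function.Periodic (chirp ζ n k m) n := by
  intro l
  have hζ0 : ζ ≠ 0 := hζ.ne_zero (by omega)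
  rw [chirp, chirp, show 2 * k * (l + n) + (n - (l + n)) * (l + n) * m
      = 2 * k * l + (n - l) * l * m + ((2 * n : ℕ) : ℤ) * (k - l * m) by push_cast; ring,
    zpow_add₀ hζ0, zpow_mul, zpow_natCast, hζ.pow_eq_one, one_zpow, mul_one]

theorem chirp_add_mul_star (hζ : IsPrimitiveRoot ζ (2 * n)) (hn : n ≠ 0) (j l : ℤ) :
    chirp ζ n k m (j + l) * star (chirp ζ n k m l) =
      chirp ζ n k m j * (ζ ^ 2) ^ (-(m * j) * l) := by
  have hζ0 : ζ ≠ 0 := hζ.ne_zero (by omega)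
  rw [chirp, chirp, chirp, ← starRingEnd_apply, map_zpow₀,
    ← inv_eq_conj (hζ.norm'_eq_one (by omega)), inv_zpow', ← zpow_add₀ hζ0, ← zpow_natCast,
    ← zpow_mul, ← zpow_add₀ hζ0]
  congr 1
  push_cast
  ring

theorem chirp_sum_mul_conj (hζ : IsPrimitiveRoot ζ (2 * n)) (hn : n ≠ 0) :
    (∑ l ∈ range n, chirp ζ n k m l) * conj (∑ l ∈ range n, chirp ζ n k m l) =
      n * ∑ j ∈ range n, chirp ζ n k m j * if (n : ℤ) ∣ m * j then 1 else 0 := by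
  have hω : IsPrimitiveRoot (ζ ^ 2) n := hζ.pow (by omega) rfl
  rw [starRingEnd_apply, (chirp_periodic k m hζ hn).sum_range_mul_star_sum, mul_sum]
  refine sum_congr rfl fun j _ => ?_
  simp_rw [chirp_add_mul_star k m hζ hn, ← mul_sum, hω.sum_range_zpow_mul, dvd_neg]
  split_ifs <;> ring

end chirp

theorem gauss_sum_abs_sq_identity (k m : ℤ) (n : ℕ) (hn : 0 < n) :
    ((‖(1 / (n : ℂ)) * ∑ l ∈ Finset.range n,
        Complex.exp (2 * Real.pi * Complex.I * (k * l : ℂ) / n) *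
          Complex.exp (Real.pi * Complex.I * (((n : ℂ) - l) * l * m) / n)‖)^2 : ℂ) =
      (1 / (n : ℂ)) * ∑ l ∈ Finset.range n,
        Complex.exp (2 * Real.pi * Complex.I * (k * l : ℂ) / n) *
          Complex.exp (Real.pi * Complex.I * (((n : ℂ) - l) * l * m) / n) *
          (if (n : ℤ) ∣ m * l then 1 else 0) := by
  set ζ := Complex.exp (Real.pi * Complex.I / n)
  have hζ : IsPrimitiveRoot ζ (2 * n) := by
    convert Complex.isPrimitiveRoot_exp (2 * n) (by omega) using 2
    push_cast
    field_simp
  have hchirp : ∀ l : ℕ, Complex.exp (2 * Real.pi * Complex.I * (k * l : ℂ) / n) *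
      Complex.exp (Real.pi * Complex.I * (((n : ℂ) - l) * l * m) / n) = chirp ζ n k m l := by
    intro l
    rw [chirp, ← Complex.exp_int_mul, ← Complex.exp_add]
    congr 1
    push_cast
    ring
  simp_rw [hchirp, ← mul_conj', map_mul, mul_mul_mul_comm, chirp_sum_mul_conj k m hζ hn.ne',
    map_div₀, map_one, map_natCast]
  field_simp
end

section
/- For a positive even integer n = 2m, the number of l in [1, 2m] with 4m | (2m−l)l equals the number of k in [1, m] with m | k². -/
open Finset

lemma aux_dvd (m k : ℕ) (hk : k ≤ m) : m ∣ (m - k) * k ↔ m ∣ k ^ 2 := by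
  have hle : k * k ≤ m * k := Nat.mul_le_mul_right _ hk
  have hmk : m ∣ m * k := dvd_mul_right m k
  constructor
  · intro h
    have h2 := Nat.dvd_sub hmk h
    rwa [Nat.sub_mul, Nat.sub_sub_self hle, ← pow_two] at h2
  · intro h
    have h' : m ∣ k * k := by rwa [pow_two] at h
    have h2 := Nat.dvd_sub hmk h'
    rwa [← Nat.sub_mul] at h2

lemma key (m k : ℕ) (hk : k ≤ m) :
    4 * m ∣ (2 * m - 2 * k) * (2 * k) ↔ m ∣ k ^ 2 := by
  obtain ⟨d, rfl⟩ : ∃ d, m = k + d := ⟨m - k, by omega⟩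
  have e : (2 * (k + d) - 2 * k) * (2 * k) = 4 * (((k + d) - k) * k) := by
    have h1 : 2 * (k + d) - 2 * k = 2 * d := by omega
    have h2 : (k + d) - k = d := by omega
    rw [h1, h2]; ring
  rw [e, mul_dvd_mul_iff_left (by norm_num : (4:ℕ) ≠ 0)]
  exact aux_dvd _ _ hk

lemma even_of_mem (m l : ℕ) (h2 : l ≤ 2 * m) (hd : 4 * m ∣ (2 * m - l) * l) :
    Even l := by
  by_contra hodd
  rw [Nat.not_even_iff_odd] at hodd
  have ho : Odd (2 * m - l) := Nat.Even.sub_odd h2 (even_two_mul m) hodd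
  have hop : Odd ((2 * m - l) * l) := ho.mul hodd
  have h2d : 2 ∣ (2 * m - l) * l := dvd_trans ⟨2 * m, by ring⟩ hd
  exact (Nat.not_even_iff_odd.mpr hop) (even_iff_two_dvd.mpr h2d)

theorem even_count_eq (m : ℕ) (hm : 0 < m) :
    ((Finset.Icc 1 (2 * m)).filter (fun l => 4 * m ∣ (2 * m - l) * l)).card =
      ((Finset.Icc 1 m).filter (fun k => m ∣ k ^ 2)).card := by
  refine Finset.card_bij' (fun l _ => l / 2) (fun k _ => 2 * k) ?_ ?_ ?_ ?_
  · intro l hl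
    simp only [mem_filter, mem_Icc] at hl ⊢
    obtain ⟨⟨h1, h2⟩, hd⟩ := hl
    obtain ⟨k, hkl⟩ := even_of_mem m l h2 hd
    have hkl2 : l = 2 * k := by omega
    subst hkl2
    rw [Nat.mul_div_cancel_left k two_pos]
    exact ⟨⟨by omega, by omega⟩, (key m k (by omega)).mp hd⟩
  · intro k hk
    simp only [mem_filter, mem_Icc] at hk ⊢
    exact ⟨⟨by omega, by omega⟩, (key m k hk.1.2).mpr hk.2⟩
  · intro l hl
    simp only [mem_filter, mem_Icc] at hl
    obtain ⟨k, hkl⟩ := even_of_mem m l hl.1.2 hl.2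
    show 2 * (l / 2) = l
    omega
  · intro k hk
    show 2 * k / 2 = k
    omega
end

section
/- Define h#(n) = √n · #{ l : 1 ≤ l ≤ n, 2n | (n−l)l }. Then h# is a multiplicative function of n. -/
/-!
The residue of (n - l) l modulo 2n is n-periodic in l, so twice the count is the number of roots
of (n - y) y in ZMod (2n). For coprime a, b with a odd, the Chinese remainder theorem splits
ZMod (2ab) as ZMod a × ZMod (2b); since ab ≡ 0 mod a and ab ≡ b mod 2b, the root count factors
as (roots of -y² in ZMod a) · (twice the count for b), and the same splitting of ZMod (2a)
identifies the first factor with the count for a.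
-/

open Finset

theorem count_mul_of_periodic {p : ℕ → Prop} [DecidablePred p] {n : ℕ}
    (hp : Function.Periodic p n) (k : ℕ) : Nat.count p (k * n) = k * Nat.count p n := by
  have hp' : ∀ j, p (j + n) = p j := hp
  induction k with
  | zero => simp
  | succ k ih => rw [add_one_mul, Nat.count_add', add_one_mul, ← ih]; simp only [hp']

theorem count_natCast_eq_card {m : ℕ} [NeZero m] (Q : ZMod m → Prop) [DecidablePred Q] :
    Nat.count (fun k : ℕ => Q k) m = Nat.card {x : ZMod m // Q x} := by
  rw [Nat.count_eq_card_filter_range, Nat.card_eq_fintype_card, Fintype.card_subtype]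
  refine card_nbij' (fun k => (k : ZMod m)) ZMod.val ?_ ?_ ?_ ?_
  · intro k hk; simp_all
  · intro x hx; simp_all [x.val_lt]
  · intro k hk; simp_all [Nat.mod_eq_of_lt]
  · intro x _; exact ZMod.natCast_zmod_val x

noncomputable def rootCount (m t : ℕ) : ℕ := Nat.card {y : ZMod m // (t - y) * y = 0}

theorem rootCount_mul {m k : ℕ} (hmk : m.Coprime k) (t : ℕ) :
    rootCount (m * k) t = rootCount m t * rootCount k t := by
  rw [rootCount, rootCount, rootCount, ← Nat.card_prod,
    ← Nat.card_congr Equiv.subtypeProdEquivProd]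
  refine Nat.card_congr ((ZMod.chineseRemainder hmk).toEquiv.subtypeEquiv fun y => ?_)
  rw [← (ZMod.chineseRemainder hmk).injective.eq_iff, map_zero, map_mul, map_sub, map_natCast,
    Prod.ext_iff]
  rfl

theorem rootCount_congr {m t t' : ℕ} (h : t ≡ t' [MOD m]) : rootCount m t = rootCount m t' := by
  rw [rootCount, rootCount, (ZMod.natCast_eq_natCast_iff _ _ _).2 h]

theorem rootCount_two_one : rootCount 2 1 = 2 := by
  rw [rootCount, Nat.card_eq_fintype_card]
  decide

def hsharpCount (n : ℕ) : ℕ := ((Icc 1 n).filter (fun l => 2 * n ∣ (n - l) * l)).card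

theorem two_mul_hsharpCount {n : ℕ} (hn : 0 < n) : 2 * hsharpCount n = rootCount (2 * n) n := by
  have : NeZero (2 * n) := ⟨by positivity⟩
  let P : ℕ → Prop := fun l => ((n : ZMod (2 * n)) - l) * l = 0
  have hper : Function.Periodic P n := by
    have h2n : (2 * n : ZMod (2 * n)) = 0 := by exact_mod_cast ZMod.natCast_self (2 * n)
    intro l
    simp only [P, Nat.cast_add]
    rw [show ((n : ZMod (2 * n)) - (l + n)) * (l + n) = (n - l) * l by
      linear_combination (-(l : ZMod (2 * n))) * h2n]
  have hcount : hsharpCount n = Nat.count P n := by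
    rw [← Nat.filter_Ico_card_eq_of_periodic 1 n P hper, add_comm,
      Finset.Ico_add_one_right_eq_Icc, hsharpCount]
    refine congrArg card (filter_congr fun l hl => ?_)
    rw [← ZMod.natCast_eq_zero_iff, Nat.cast_mul, Nat.cast_sub (mem_Icc.1 hl).2]
  rw [hcount, ← count_mul_of_periodic hper, rootCount, ← count_natCast_eq_card]

theorem hsharpCount_of_odd {a : ℕ} (ha : Odd a) : hsharpCount a = rootCount a 0 := by
  have h := two_mul_hsharpCount ha.pos
  rw [mul_comm 2 a, rootCount_mul (Nat.coprime_two_right.2 ha),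
    rootCount_congr (Nat.modEq_zero_iff_dvd.2 dvd_rfl),
    rootCount_congr (m := 2) (t' := 1) (Nat.odd_iff.1 ha), rootCount_two_one] at h
  omega

theorem hsharpCount_mul_of_odd {a b : ℕ} (ha : Odd a) (hb : 0 < b) (hab : a.Coprime b) :
    hsharpCount (a * b) = hsharpCount a * hsharpCount b := by
  have hab_modEq : a * b ≡ b [MOD 2 * b] := by
    obtain ⟨k, rfl⟩ := ha
    rw [show (2 * k + 1) * b = b + 2 * b * k by ring]
    exact Nat.add_mul_mod_self_left b (2 * b) k
  have h := two_mul_hsharpCount (Nat.mul_pos ha.pos hb)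
  rw [mul_left_comm, rootCount_mul ((Nat.coprime_two_right.2 ha).mul_right hab),
    rootCount_congr (m := a) (t' := 0) (Nat.modEq_zero_iff_dvd.2 (dvd_mul_right a b)),
    rootCount_congr (m := 2 * b) (t' := b) hab_modEq, ← two_mul_hsharpCount hb,
    ← hsharpCount_of_odd ha] at h
  linarith

theorem hsharpCount_mul {a b : ℕ} (ha : 0 < a) (hb : 0 < b) (hab : a.Coprime b) :
    hsharpCount (a * b) = hsharpCount a * hsharpCount b := by
  rcases Nat.even_or_odd a with ha' | ha'
  · have hb' : Odd b := (Nat.Coprime.coprime_dvd_left ha'.two_dvd hab).odd_of_left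
    rw [mul_comm, hsharpCount_mul_of_odd hb' ha hab.symm, mul_comm]
  · exact hsharpCount_mul_of_odd ha' hb hab

theorem hsharp_multiplicative
    (h : ℕ → ℝ)
    (hdef : ∀ n : ℕ, h n = Real.sqrt n *
      ((Finset.Icc 1 n).filter (fun l => 2 * n ∣ (n - l) * l)).card) :
    h 1 = 1 ∧ ∀ a b : ℕ, 0 < a → 0 < b → Nat.Coprime a b →
      h (a * b) = h a * h b := by
  have h_eq : ∀ n, h n = Real.sqrt n * hsharpCount n := hdef
  refine ⟨by simp [h_eq, show hsharpCount 1 = 1 by decide], fun a b ha hb hab => ?_⟩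
  rw [h_eq, h_eq, h_eq, hsharpCount_mul ha hb hab, Nat.cast_mul, Nat.cast_mul,
    Real.sqrt_mul (Nat.cast_nonneg a)]
  ring
end

section
/- For odd positive n with n = λν² (λ squarefree), h#(n) = √n · ν, where h#(n) = √n · #{ l ∈ [1,n] : 2n | (n−l)l }. -/
open Finset

theorem hsharp_odd (n lam ν : ℕ) (hn : 0 < n) (hodd : Odd n)
    (hlam : Squarefree lam) (hν : 0 < ν) (hfact : n = lam * ν ^ 2) :
    Real.sqrt n *
        ((Finset.Icc 1 n).filter (fun l => 2 * n ∣ (n - l) * l)).card =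
      Real.sqrt n * ν := by
  have hlam0 : 0 < lam := by
    rcases Nat.eq_zero_or_pos lam with h | h
    · simp [h] at hfact; omega
    · exact h
  congr 1
  norm_cast
  have key : ∀ l ∈ Icc 1 n, (2 * n ∣ (n - l) * l ↔ lam * ν ∣ l) := by
    intro l hl
    simp only [mem_Icc] at hl
    obtain ⟨hl1, hln⟩ := hl
    have hsub : (n - l) * l = n * l - l ^ 2 := by
      rw [Nat.sub_mul, pow_two]
    have hle : l ^ 2 ≤ n * l := by nlinarith
    constructor
    · intro h
      have hnd : n ∣ (n - l) * l := (dvd_mul_left n 2).trans h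
      have hl2 : n ∣ l ^ 2 := by
        have h2 : n ∣ n * l - l ^ 2 := by rwa [hsub] at hnd
        have := Nat.dvd_sub (dvd_mul_right n l) h2
        rwa [Nat.sub_sub_self hle] at this
      rw [hfact] at hl2
      have hν2 : ν ^ 2 ∣ l ^ 2 := (dvd_mul_left _ _).trans hl2
      have hνl : ν ∣ l := (Nat.pow_dvd_pow_iff (by norm_num)).mp hν2
      obtain ⟨m, hm⟩ := hνl
      have hlamm : lam ∣ m := by
        rw [← hlam.dvd_pow_iff_dvd (y := m) (n := 2) two_ne_zero]
        have h1 : ν ^ 2 * lam ∣ ν ^ 2 * m ^ 2 := by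
          rw [hm] at hl2
          rw [mul_comm]
          convert hl2 using 1; ring
        exact (Nat.mul_dvd_mul_iff_left (pow_pos hν 2)).mp h1
      obtain ⟨k, hk⟩ := hlamm
      exact ⟨k, by rw [hm, hk]; ring⟩
    · rintro ⟨m, hm⟩
      have hl2 : n ∣ l ^ 2 := ⟨lam * m ^ 2, by rw [hm, hfact]; ring⟩
      have hndvd : n ∣ (n - l) * l := by
        rw [hsub]
        exact Nat.dvd_sub (dvd_mul_right n l) hl2
      have heven : 2 ∣ (n - l) * l := by
        rcases Nat.even_or_odd l with he | ho
        · exact (he.mul_left _).two_dvd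
        · exact ((Nat.Odd.sub_odd hodd ho).mul_right _).two_dvd
      have hcop : Nat.Coprime 2 n := by
        exact hodd.coprime_two_left
      exact hcop.mul_dvd_of_dvd_of_dvd heven hndvd
  rw [filter_congr key]
  have : Icc 1 n = Ioc 0 n := rfl
  rw [this, Nat.Ioc_filter_dvd_card_eq_div, hfact]
  rw [pow_two, ← mul_assoc, Nat.mul_div_cancel_left _ (by positivity)]
end

section
/- For even positive n with n/2 = κη² (κ squarefree), h#(n) = √n · η, where h#(n) = √n · #{ l ∈ [1,n] : 2n | (n−l)l }. -/
open Finset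

theorem hsharp_even (n κ η : ℕ) (hn : 0 < n) (heven : Even n)
    (hκ : Squarefree κ) (hη : 0 < η) (hfact : n / 2 = κ * η ^ 2) :
    Real.sqrt n *
        ((Finset.Icc 1 n).filter (fun l => 2 * n ∣ (n - l) * l)).card =
      Real.sqrt n * η := by
  have hκ0 : 0 < κ := Nat.pos_of_ne_zero (by rintro rfl; exact not_squarefree_zero hκ)
  obtain ⟨c, hc⟩ := heven
  have hn2 : n = 2 * (κ * η ^ 2) := by omega
  set m := 2 * κ * η with hm
  have hm0 : 0 < m := by positivity
  have hnm : n = m * η := by rw [hn2, hm]; ring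
  have hset : (Finset.Icc 1 n).filter (fun l => 2 * n ∣ (n - l) * l)
      = (Finset.Ioc 0 n).filter (fun l => m ∣ l) := by
    rw [show (1 : ℕ) = 0 + 1 from rfl, Finset.Icc_add_one_left_eq_Ioc]
    apply filter_congr
    intro l hl
    simp only [mem_Ioc] at hl
    constructor
    · intro hdvd
      -- l is even
      have hevenl : Even l := by
        have h2 : (2 : ℕ) ∣ (n - l) * l := dvd_trans ⟨n, rfl⟩ hdvd
        rcases Nat.even_mul.mp (even_iff_two_dvd.mpr h2) with h | h
        · by_contra hodd
          have hodd' : Odd l := Nat.not_even_iff_odd.mp hodd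
          have h1 : Odd (n - l) := Nat.Even.sub_odd hl.2 ⟨c, by omega⟩ hodd'
          exact (Nat.not_even_iff_odd.mpr h1) h
        · exact h
      obtain ⟨j, hj⟩ := hevenl
      -- 2n ∣ n*l
      have hnl : 2 * n ∣ n * l := ⟨j, by rw [hj]; ring⟩
      have hll : 2 * n ∣ l * l := by
        have h1 : (n - l) * l = n * l - l * l := by rw [Nat.sub_mul]
        have h2 : l * l ≤ n * l := Nat.mul_le_mul_right _ hl.2
        have h3 : l * l = n * l - (n - l) * l := by omega
        rw [h3]; exact Nat.dvd_sub hnl hdvd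
      have hkey : κ * (2 * η) ^ 2 ∣ l ^ 2 := by
        have : κ * (2 * η) ^ 2 = 2 * n := by rw [hn2]; ring
        rw [this, sq]; exact hll
      have h2η : 2 * η ∣ l :=
        (Nat.pow_dvd_pow_iff two_ne_zero).mp ((dvd_mul_left _ _).trans hkey)
      obtain ⟨t, rfl⟩ := h2η
      have hκt : κ ∣ t := by
        have h4 : (2 * η) ^ 2 * κ ∣ (2 * η) ^ 2 * t ^ 2 := by
          rw [mul_comm ((2 * η) ^ 2) κ]
          calc κ * (2 * η) ^ 2 ∣ (2 * η * t) ^ 2 := hkey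
            _ = (2 * η) ^ 2 * t ^ 2 := by ring
        have h5 : κ ∣ t ^ 2 :=
          (Nat.mul_dvd_mul_iff_left (by positivity : 0 < (2 * η) ^ 2)).mp h4
        exact (hκ.dvd_pow_iff_dvd two_ne_zero).mp h5
      obtain ⟨s, rfl⟩ := hκt
      exact ⟨s, by rw [hm]; ring⟩
    · rintro ⟨k, rfl⟩
      have hkη : k ≤ η := by
        have := hl.2
        rw [hnm] at this
        exact Nat.le_of_mul_le_mul_left this hm0
      have hsub : n - m * k = m * (η - k) := by
        rw [hnm, Nat.mul_sub]
      exact ⟨κ * (η - k) * k, by rw [hsub, hn2, hm]; ring⟩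
  have hcard : ((Finset.Icc 1 n).filter (fun l => 2 * n ∣ (n - l) * l)).card = η := by
    rw [hset, Nat.Ioc_filter_dvd_card_eq_div, hnm, Nat.mul_div_cancel_left η hm0]
  rw [hcard]
end

section
/- Let h#(n) = √n · #{ l ∈ [1,n] : 2n | (n−l)l } and write n = λν² with λ squarefree. Then λ = (n/(2 h#(n)))² if n is even with v_2(n) even, and λ = (n/h#(n))² otherwise. -/
open Finset

lemma val_sub_eq {p n l : ℕ} (hp : p.Prime) (hl : 0 < l) (hln : l < n)
    (hA : l.factorization p < n.factorization p) :
    (n - l).factorization p = l.factorization p := by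
  have hl0 : l ≠ 0 := hl.ne'
  have hnl0 : n - l ≠ 0 := by omega
  have hn0 : n ≠ 0 := by omega
  set A := l.factorization p with hA'
  have h2 : p ^ A ∣ n := (Nat.Prime.pow_dvd_iff_le_factorization hp hn0).2 hA.le
  have h3 : p ^ A ∣ n - l := Nat.dvd_sub h2 (Nat.ordProj_dvd l p)
  have h4 : A ≤ (n - l).factorization p :=
    (Nat.Prime.pow_dvd_iff_le_factorization hp hnl0).1 h3
  by_contra hne
  have h6 : p ^ (A + 1) ∣ n - l :=
    (Nat.Prime.pow_dvd_iff_le_factorization hp hnl0).2 (by omega)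
  have h7 : p ^ (A + 1) ∣ n :=
    (Nat.Prime.pow_dvd_iff_le_factorization hp hn0).2 (by omega)
  have h8 : p ^ (A + 1) ∣ l := by
    have := Nat.dvd_sub h7 h6
    rwa [Nat.sub_sub_self hln.le] at this
  have := (Nat.Prime.pow_dvd_iff_le_factorization hp hl0).1 h8
  omega

lemma val_sub_ge {p n l : ℕ} (hp : p.Prime) (hl : 0 < l) (hln : l < n)
    (hA : n.factorization p ≤ l.factorization p) :
    n.factorization p ≤ (n - l).factorization p := by
  have h2 : p ^ n.factorization p ∣ l :=
    (Nat.Prime.pow_dvd_iff_le_factorization hp hl.ne').2 hA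
  have h3 : p ^ n.factorization p ∣ n - l := Nat.dvd_sub (Nat.ordProj_dvd n p) h2
  exact (Nat.Prime.pow_dvd_iff_le_factorization hp (by omega)).1 h3

lemma nu_even {n lam ν : ℕ} (hlam : Squarefree lam) (hν : 0 < ν)
    (hfact : n = lam * ν ^ 2) (hE : Even n ∧ Even (padicValNat 2 n)) : 2 ∣ ν := by
  have hlam0 : lam ≠ 0 := hlam.ne_zero
  have hn0 : n ≠ 0 := by rw [hfact]; exact Nat.mul_ne_zero hlam0 (pow_ne_zero _ hν.ne')
  have hfa : n.factorization 2 = lam.factorization 2 + 2 * ν.factorization 2 := by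
    rw [hfact, Nat.factorization_mul hlam0 (pow_ne_zero _ hν.ne'), Nat.factorization_pow]
    simp [mul_comm]
  have h1 : 1 ≤ n.factorization 2 :=
    (Nat.Prime.dvd_iff_one_le_factorization Nat.prime_two hn0).1 (even_iff_two_dvd.mp hE.1)
  have h2 : n.factorization 2 % 2 = 0 := by
    have := hE.2
    rw [Nat.even_iff] at this
    rwa [Nat.factorization_def n Nat.prime_two]
  have h3 : lam.factorization 2 ≤ 1 := hlam.natFactorization_le_one 2
  have h4 : 1 ≤ ν.factorization 2 := by omega
  exact (Nat.Prime.dvd_iff_one_le_factorization Nat.prime_two hν.ne').2 h4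

lemma dvd_iff_key {n lam ν : ℕ} (hlam : Squarefree lam) (hν : 0 < ν)
    (hfact : n = lam * ν ^ 2) {D : ℕ}
    (hD : D = if Even n ∧ Even (padicValNat 2 n) then 2 * lam * ν else lam * ν)
    {l : ℕ} (hl1 : 1 ≤ l) (hl2 : l ≤ n) :
    2 * n ∣ (n - l) * l ↔ D ∣ l := by
  have hlam0 : lam ≠ 0 := hlam.ne_zero
  have hn0 : n ≠ 0 := by rw [hfact]; exact Nat.mul_ne_zero hlam0 (pow_ne_zero _ hν.ne')
  have hD0 : D ≠ 0 := by
    rw [hD]; split <;> positivity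
  have hDn : D ∣ n := by
    rw [hD]; split
    · obtain ⟨k, hk⟩ := nu_even hlam hν hfact (by assumption)
      exact ⟨k, by rw [hfact, hk]; ring⟩
    · exact ⟨ν, by rw [hfact]; ring⟩
  rcases eq_or_lt_of_le hl2 with rfl | hln
  · simp [hDn]
  -- now l < n
  have hl0 : l ≠ 0 := by omega
  have hnl0 : n - l ≠ 0 := by omega
  rw [← Nat.factorization_le_iff_dvd (by positivity) (Nat.mul_ne_zero hnl0 hl0),
      ← Nat.factorization_le_iff_dvd hD0 hl0, Finsupp.le_def, Finsupp.le_def]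
  apply forall_congr'
  intro p
  by_cases hp : p.Prime
  · rw [Nat.factorization_mul two_ne_zero hn0, Nat.factorization_mul hnl0 hl0]
    simp only [Finsupp.add_apply]
    set A := l.factorization p with hA
    set B := (n - l).factorization p with hB
    set a := n.factorization p with ha
    have hfa : a = lam.factorization p + 2 * ν.factorization p := by
      rw [ha, hfact, Nat.factorization_mul hlam0 (pow_ne_zero _ hν.ne'),
        Nat.factorization_pow]
      simp [mul_comm]
    have hsq : lam.factorization p ≤ 1 := hlam.natFactorization_le_one p
    have h2p : (Nat.factorization 2) p = if p = 2 then 1 else 0 := by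
      rw [Nat.Prime.factorization Nat.prime_two, Finsupp.single_apply]
      simp [eq_comm]
    have hS1 : A < a → B = A := fun h => val_sub_eq hp (by omega) hln h
    have hS2 : a ≤ A → a ≤ B := fun h => val_sub_ge hp (by omega) hln h
    by_cases hEv : Even n ∧ Even (padicValNat 2 n)
    · rw [if_pos hEv] at hD
      have hDp : D.factorization p =
          (if p = 2 then 1 else 0) + lam.factorization p + ν.factorization p := by
        rw [hD, Nat.factorization_mul (Nat.mul_ne_zero two_ne_zero hlam0) hν.ne',
          Nat.factorization_mul two_ne_zero hlam0]
        simp only [Finsupp.add_apply, h2p]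
      rw [hDp]
      by_cases hp2 : p = 2
      · subst hp2
        try simp only [h2p, reduceIte] at hDp ⊢
        have h1 : 1 ≤ a :=
          (Nat.Prime.dvd_iff_one_le_factorization Nat.prime_two hn0).1
            (even_iff_two_dvd.mp hEv.1)
        have h2 : a % 2 = 0 := by
          have := hEv.2; rw [Nat.even_iff] at this
          rw [ha, Nat.factorization_def n Nat.prime_two]; exact this
        rcases Nat.lt_or_ge A a with hc | hc
        · have := hS1 hc; omega
        · have := hS2 hc; omega
      · try simp only [h2p, if_neg hp2] at hDp ⊢
        rcases Nat.lt_or_ge A a with hc | hc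
        · have := hS1 hc; omega
        · have := hS2 hc; omega
    · rw [if_neg hEv] at hD
      have hDp : D.factorization p = lam.factorization p + ν.factorization p := by
        rw [hD, Nat.factorization_mul hlam0 hν.ne']
        simp only [Finsupp.add_apply]
      rw [hDp]
      by_cases hp2 : p = 2
      · subst hp2
        try simp only [h2p, reduceIte] at hDp ⊢
        by_cases hne : Even n
        · have h1 : 1 ≤ a :=
            (Nat.Prime.dvd_iff_one_le_factorization Nat.prime_two hn0).1
              (even_iff_two_dvd.mp hne)
          have h2 : a % 2 = 1 := by
            have hv : ¬ Even (padicValNat 2 n) := fun h => hEv ⟨hne, h⟩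
            rw [Nat.even_iff] at hv
            rw [ha, Nat.factorization_def n Nat.prime_two]; omega
          rcases Nat.lt_or_ge A a with hc | hc
          · have := hS1 hc; omega
          · have := hS2 hc; omega
        · have h1 : a = 0 := by
            rw [ha]
            exact Nat.factorization_eq_zero_of_not_dvd
              (fun h => hne (even_iff_two_dvd.mpr h))
          have h2 : 1 ≤ A + B := by
            by_cases hld : 2 ∣ l
            · have : 1 ≤ A :=
                (Nat.Prime.dvd_iff_one_le_factorization Nat.prime_two hl0).1 hld
              omega
            · have hodd : Odd l := Nat.odd_iff.mpr (by omega)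
              have hnodd : Odd n := Nat.odd_iff.mpr (by
                rw [Nat.even_iff] at hne; omega)
              have hev : Even (n - l) := Nat.Odd.sub_odd hnodd hodd
              have : 1 ≤ B :=
                (Nat.Prime.dvd_iff_one_le_factorization Nat.prime_two hnl0).1
                  (even_iff_two_dvd.mp hev)
              omega
          omega
      · try simp only [h2p, if_neg hp2] at hDp ⊢
        rcases Nat.lt_or_ge A a with hc | hc
        · have := hS1 hc; omega
        · have := hS2 hc; omega
  · simp [Nat.factorization_eq_zero_of_not_prime _ hp]

theorem squarefree_part_from_hsharp (n lam ν : ℕ) (hn : 0 < n)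
    (hlam : Squarefree lam) (hν : 0 < ν) (hfact : n = lam * ν ^ 2)
    (h : ℝ)
    (hdef : h = Real.sqrt n *
      ((Finset.Icc 1 n).filter (fun l => 2 * n ∣ (n - l) * l)).card) :
    (lam : ℝ) =
      if Even n ∧ Even (padicValNat 2 n) then ((n : ℝ) / (2 * h)) ^ 2
      else ((n : ℝ) / h) ^ 2 := by
  have hlam0 : lam ≠ 0 := hlam.ne_zero
  set D := if Even n ∧ Even (padicValNat 2 n) then 2 * lam * ν else lam * ν with hD
  have hicc : Finset.Icc 1 n = Finset.Ioc 0 n := by ext x; simp; omega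
  have hfilter : ((Finset.Icc 1 n).filter (fun l => 2 * n ∣ (n - l) * l)) =
      (Finset.Ioc 0 n).filter (fun l => D ∣ l) := by
    rw [hicc]
    apply Finset.filter_congr
    intro x hx
    simp only [Finset.mem_Ioc] at hx
    simpa using dvd_iff_key hlam hν hfact hD hx.1 hx.2
  have hcard : ((Finset.Icc 1 n).filter (fun l => 2 * n ∣ (n - l) * l)).card = n / D := by
    rw [hfilter]
    exact Nat.Ioc_filter_dvd_card_eq_div n D
  have hsq : Real.sqrt n ^ 2 = n := Real.sq_sqrt (by positivity)
  have hsp : (0:ℝ) < Real.sqrt n := Real.sqrt_pos.mpr (by exact_mod_cast hn)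
  by_cases hE : Even n ∧ Even (padicValNat 2 n)
  · obtain ⟨k, hk⟩ := nu_even hlam hν hfact hE
    have hk0 : 0 < k := by omega
    have hnD : n = D * k := by
      rw [hD, if_pos hE, hfact, hk]; ring
    have hD0 : 0 < D := by
      rw [hD, if_pos hE]
      have := Nat.pos_of_ne_zero hlam0
      positivity
    have hdiv : n / D = k := by rw [hnD, Nat.mul_div_cancel_left _ hD0]
    rw [if_pos hE, hdef, hcard, hdiv]
    have hnk : (n:ℝ) = (lam:ℝ) * (4 * (k:ℝ)^2) := by
      have : n = lam * (4 * k^2) := by rw [hfact, hk]; ring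
      exact_mod_cast congrArg (Nat.cast : ℕ → ℝ) this
    have hk0' : (0:ℝ) < (k:ℝ) := by exact_mod_cast hk0
    rw [eq_comm, div_pow, div_eq_iff (by positivity)]
    calc (n:ℝ)^2 = ((lam:ℝ) * (4 * (k:ℝ)^2)) * n := by rw [← hnk]; ring
      _ = (lam:ℝ) * (2 * (Real.sqrt n * k))^2 := by
          rw [mul_pow, mul_pow, hsq]; ring
  · have hnD : n = D * ν := by
      rw [hD, if_neg hE, hfact]; ring
    have hD0 : 0 < D := by
      rw [hD, if_neg hE]
      have := Nat.pos_of_ne_zero hlam0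
      positivity
    have hdiv : n / D = ν := by rw [hnD, Nat.mul_div_cancel_left _ hD0]
    rw [if_neg hE, hdef, hcard, hdiv]
    have hnk : (n:ℝ) = (lam:ℝ) * (ν:ℝ)^2 := by exact_mod_cast congrArg (Nat.cast : ℕ → ℝ) hfact
    have hν0' : (0:ℝ) < (ν:ℝ) := by exact_mod_cast hν
    rw [eq_comm, div_pow, div_eq_iff (by positivity)]
    calc (n:ℝ)^2 = ((lam:ℝ) * (ν:ℝ)^2) * n := by rw [← hnk]; ring
      _ = (lam:ℝ) * (Real.sqrt n * ν)^2 := by rw [mul_pow, hsq]; ring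
end

section
/- Define the multiplicative function f# by f#(2^{1+α}) = ((√2 − 1)/3)·(1 − (−2)^{1+α}) for α ≥ 0, f#(p^α) = 1 + ((p − √p)/(p+1))·((−p)^α − 1) for odd primes p and α ≥ 0, and f#(1) = 1. Then the Dirichlet convolution (f# * φ)(2^{1+α}) = 2^{(1+α)/2 + ⌊α/2⌋} and (f# * φ)(p^α) = p^{α/2 + ⌊α/2⌋} for odd primes p. -/
/-!
Write `S n = (f * φ)(p ^ n)`. Since `φ(p ^ (k + 1)) = p φ(p ^ k)` for `k ≥ 1` and `φ p = p - 1`,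
`S (n + 1) = p S n + f (p ^ (n + 1)) - f (p ^ n)`. On prime powers `f` has the shape
`a + b (-p) ^ m`, and for such values two steps of this recurrence give `S (n + 2) = p² S n`.
The claimed right-hand sides obey the same two-step recurrence, so it suffices to compare the
first two values.
-/

open Finset

/-- `(f * φ)(p ^ n)`, written as a sum over exponents. -/
def primePowConv {R : Type*} [CommRing R] (f : ℕ → R) (p n : ℕ) : R :=
  ∑ j ∈ range (n + 1), f (p ^ (n - j)) * (Nat.totient (p ^ j) : R)

section PrimePowConv

variable {R : Type*} [CommRing R] (f : ℕ → R) {p : ℕ}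

theorem sum_divisors_prime_pow_mul_totient (hp : p.Prime) (n : ℕ) :
    ∑ d ∈ (p ^ n).divisors, f d * (Nat.totient (p ^ n / d) : R) = primePowConv f p n := by
  rw [Nat.sum_divisors_prime_pow hp, primePowConv, ← sum_range_reflect]
  refine sum_congr rfl fun j hj => ?_
  have hj : j ≤ n := Nat.lt_succ_iff.mp (mem_range.mp hj)
  rw [Nat.pow_div (by omega) hp.pos, Nat.add_sub_cancel, Nat.sub_sub_self hj]

theorem primePowConv_zero : primePowConv f p 0 = f 1 := by
  simp [primePowConv]

theorem primePowConv_succ (hp : p.Prime) (n : ℕ) :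
    primePowConv f p (n + 1) = p * primePowConv f p n + f (p ^ (n + 1)) - f (p ^ n) := by
  have totient_p : (Nat.totient p : R) = p - 1 := by
    rw [Nat.totient_prime hp, Nat.cast_sub hp.one_le, Nat.cast_one]
  have totient_succ_succ (j : ℕ) :
      (Nat.totient (p ^ (j + 2)) : R) = p * Nat.totient (p ^ (j + 1)) := by
    rw [pow_succ' p (j + 1), Nat.totient_mul_of_prime_of_dvd hp (dvd_pow_self p j.succ_ne_zero),
      Nat.cast_mul]
  simp only [primePowConv, sum_range_succ' _ (n + 1), sum_range_succ' _ n, totient_succ_succ,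
    Nat.sub_zero, pow_zero, Nat.totient_one, Nat.cast_one, zero_add, pow_one, totient_p,
    Nat.add_sub_add_right]
  rw [mul_add, mul_sum]
  simp only [mul_left_comm (f _) (p : R)]
  ring

/-- By `primePowConv_succ`, `S (n + 2) - p² S n = ((E - 1)(E + p) g) n` for `g m = f (p ^ m)` and
the shift `E`, and this operator kills `a + b (-p) ^ m`. -/
theorem primePowConv_add_two (hp : p.Prime) {n : ℕ} (a b : R)
    (hf : ∀ m, n ≤ m → f (p ^ m) = a + b * (-p) ^ m) :
    primePowConv f p (n + 2) = p ^ 2 * primePowConv f p n := by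
  rw [primePowConv_succ f hp, primePowConv_succ f hp, hf n le_rfl, hf (n + 1) (by omega),
    hf (n + 2) (by omega)]
  ring

end PrimePowConv

theorem Nat.eq_of_apply_add_two {α : Type*} {u v : ℕ → α} (g : α → α)
    (hu : ∀ n, u (n + 2) = g (u n)) (hv : ∀ n, v (n + 2) = g (v n))
    (h0 : u 0 = v 0) (h1 : u 1 = v 1) : u = v := by
  funext n
  induction n using Nat.twoStepInduction with
  | zero => exact h0
  | one => exact h1
  | more n ih _ => rw [hu, hv, ih]

theorem Real.rpow_add_two {x : ℝ} (hx : x ≠ 0) (y : ℝ) : x ^ (y + 2) = x ^ 2 * x ^ y := by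
  simpa [mul_comm] using Real.rpow_add_natCast hx y 2

theorem primePowConv_eq_rpow {f : ℕ → ℝ} {p : ℕ} (hp : p.Prime)
    (hf : ∀ α : ℕ, f (p ^ α) = 1 + (((p : ℝ) - Real.sqrt p) / ((p : ℝ) + 1)) *
        ((-(p : ℝ)) ^ α - 1)) (n : ℕ) :
    primePowConv f p n = (p : ℝ) ^ ((n : ℝ) / 2 + ((n / 2 : ℕ) : ℝ)) := by
  have hp0 : (p : ℝ) ≠ 0 := by exact_mod_cast hp.ne_zero
  have f_one : f 1 = 1 := by simpa using hf 0
  have f_p : f p = 1 - (p - Real.sqrt p) := by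
    have : (p : ℝ) + 1 ≠ 0 := by positivity
    rw [← pow_one p, hf]
    simp only [pow_one]
    field_simp
    ring
  set c := ((p : ℝ) - Real.sqrt p) / ((p : ℝ) + 1)
  suffices primePowConv f p = fun n : ℕ => (p : ℝ) ^ ((n : ℝ) / 2 + ((n / 2 : ℕ) : ℝ)) from
    congrFun this n
  refine Nat.eq_of_apply_add_two ((p : ℝ) ^ 2 * ·) (fun n => ?_) (fun n => ?_) ?_ ?_
  · exact primePowConv_add_two f hp (1 - c) c fun m _ => by rw [hf]; ring
  · rw [← Real.rpow_add_two hp0]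
    congr 1
    rw [show (n + 2) / 2 = n / 2 + 1 by omega]
    push_cast
    ring
  · simp [primePowConv_zero, f_one]
  · rw [primePowConv_succ f hp, zero_add, pow_one, pow_zero, primePowConv_zero, f_one, f_p]
    norm_num [Real.sqrt_eq_rpow]
    ring

theorem primePowConv_two_eq_rpow {f : ℕ → ℝ} (hf1 : f 1 = 1)
    (hf2 : ∀ α : ℕ, f (2 ^ (1 + α)) = ((Real.sqrt 2 - 1) / 3) * (1 - (-2 : ℝ) ^ (1 + α)))
    (α : ℕ) :
    primePowConv f 2 (1 + α) = (2 : ℝ) ^ (((1 + α : ℕ) : ℝ) / 2 + ((α / 2 : ℕ) : ℝ)) := by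
  set c := (Real.sqrt 2 - 1) / 3
  have hf (m : ℕ) (hm : 1 ≤ m) : f (2 ^ m) = c + (-c) * (-((2 : ℕ) : ℝ)) ^ m := by
    obtain ⟨α, rfl⟩ := Nat.exists_eq_add_of_le hm
    rw [hf2]
    ring
  have f_two : f 2 = Real.sqrt 2 - 1 := by
    rw [← pow_one 2, hf 1 le_rfl]
    ring
  have f_four : f 4 = 1 - Real.sqrt 2 := by
    rw [show 4 = 2 ^ 2 by rfl, hf 2 (by norm_num)]
    ring
  suffices (fun α => primePowConv f 2 (1 + α)) =
      fun α : ℕ => (2 : ℝ) ^ (((1 + α : ℕ) : ℝ) / 2 + ((α / 2 : ℕ) : ℝ)) from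
    congrFun this α
  refine Nat.eq_of_apply_add_two ((2 : ℝ) ^ 2 * ·) (fun α => ?_) (fun α => ?_) ?_ ?_
  · exact_mod_cast primePowConv_add_two f Nat.prime_two (n := 1 + α) c (-c)
      fun m hm => hf m (by omega)
  · rw [← Real.rpow_add_two two_ne_zero]
    congr 1
    rw [show (α + 2) / 2 = α / 2 + 1 by omega]
    push_cast
    ring
  · rw [show 1 + 0 = 0 + 1 from rfl, primePowConv_succ f Nat.prime_two, primePowConv_zero]
    norm_num [hf1, f_two, Real.sqrt_eq_rpow]
    ring
  · rw [show 1 + 1 = 0 + 1 + 1 from rfl, primePowConv_succ f Nat.prime_two,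
      primePowConv_succ f Nat.prime_two, primePowConv_zero]
    norm_num [hf1, f_two, f_four]
    ring

theorem fsharp_conv_totient (f : ℕ → ℝ) (hf1 : f 1 = 1)
    (hf2 : ∀ α : ℕ, f (2 ^ (1 + α)) =
      ((Real.sqrt 2 - 1) / 3) * (1 - (-2 : ℝ) ^ (1 + α)))
    (hfp : ∀ p α : ℕ, p.Prime → Odd p →
      f (p ^ α) = 1 + (((p : ℝ) - Real.sqrt p) / ((p : ℝ) + 1)) *
        ((-(p : ℝ)) ^ α - 1)) :
    (∀ α : ℕ,
      (∑ d ∈ (2 ^ (1 + α)).divisors, f d * (Nat.totient (2 ^ (1 + α) / d) : ℝ)) =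
        (2 : ℝ) ^ (((1 + α : ℕ) : ℝ) / 2 + ((α / 2 : ℕ) : ℝ))) ∧
    ∀ p α : ℕ, p.Prime → Odd p →
      (∑ d ∈ (p ^ α).divisors, f d * (Nat.totient (p ^ α / d) : ℝ)) =
        (p : ℝ) ^ ((α : ℝ) / 2 + ((α / 2 : ℕ) : ℝ)) := by
  refine ⟨fun α => ?_, fun p α hp hodd => ?_⟩
  · rw [sum_divisors_prime_pow_mul_totient f Nat.prime_two]
    exact primePowConv_two_eq_rpow hf1 hf2 α
  · rw [sum_divisors_prime_pow_mul_totient f hp]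
    exact primePowConv_eq_rpow hp (fun β => hfp p β hp hodd) α
end
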